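/- arXiv:0712.1328 — 7 statements merged into one kernel-verified Lean document; each statement's English description precedes it below -/
import Mathlib

section
/- Let Λ be a local Artinian algebra with J(Λ)² = 0 and M a finitely generated indecomposable Λ-module. If M is torsionless and Ext¹_Λ(M, M) = 0, then M is projective. -/
open CategoryTheory

universe u

noncomputable abbrev ExtGrp (Λ : Type u) [Ring Λ] (M N : ModuleCat.{u} Λ) (n : ℕ) :
    Type u :=
  ((Ext ℤ (ModuleCat.{u} Λ) n).obj (Opposite.op M)).obj N

/-- `M` is indecomposable: nonzero and admits no nontrivial direct sum decomposition. -/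
def IsIndecomposableModule (Λ : Type u) [Ring Λ] (M : Type u) [AddCommGroup M]
    [Module Λ M] : Prop :=
  Nontrivial M ∧ ∀ A B : Submodule Λ M, IsCompl A B → A = ⊥ ∨ B = ⊥

/-- `M` is torsionless: it embeds into a finitely generated free module. -/
def IsTorsionless (Λ : Type u) [Ring Λ] (M : Type u) [AddCommGroup M]
    [Module Λ M] : Prop :=
  ∃ (n : ℕ) (f : M →ₗ[Λ] (Fin n → Λ)), Function.Injective f

/-!
In the local ring `Λ` the radical `J` is the set of nonunits, so `J² = 0` says that any two
nonunits multiply to zero. Fix an embedding `f : M ↪ Λⁿ`. If some coordinate of some `f x` is a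
unit, a coordinate functional of `f` maps `M` onto `Λ`, so `Λ` splits off `M` and
indecomposability gives `M ≅ Λ`. Otherwise `f M ⊆ Jⁿ`, hence `J M = 0`. Present `M` by a minimal
generating set, `0 → K → Λ^S → M → 0`; minimality forces `K ⊆ J^S`, so `J K = 0` and `K` is
semisimple. For `0 ≠ a ∈ J` the element `v = a • eⱼ` is a nonzero element of `K`, which some
`ψ : K → M` sends to a nonzero `m`. As `Ext¹(M, M) = 0`, `ψ` extends to `F : Λ^S → M`, yet
`F v = a • F eⱼ = 0`. Hence `J = 0`, so `f = 0`, contradicting `M ≠ 0`.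
-/

namespace IsLocalRing

variable {Λ : Type*} [Ring Λ] [IsLocalRing Λ]

instance isDedekindFiniteMonoid : IsDedekindFiniteMonoid Λ where
  mul_eq_one_symm {a b} hab := by
    have hidem : IsIdempotentElem (b * a) := by
      rw [IsIdempotentElem, mul_assoc, ← mul_assoc a, hab, one_mul]
    rcases isUnit_or_isUnit_of_add_one (add_sub_cancel (b * a) 1) with h | h
    · exact (IsIdempotentElem.iff_eq_one_of_isUnit h).1 hidem
    · have hb : b = 0 := h.mul_left_cancel <| by
        rw [mul_zero, sub_mul, one_mul, mul_assoc, hab, mul_one, sub_self]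
      simp [hb] at hab

theorem mem_jacobson_bot_of_not_isUnit {x : Λ} (hx : ¬IsUnit x) :
    x ∈ (⊥ : Ideal Λ).jacobson := by
  rw [Ideal.mem_jacobson_iff]
  intro y
  obtain ⟨u, hu⟩ := (isUnit_or_isUnit_of_add_one (neg_add_cancel_left (y * x) 1)).resolve_left
    fun h => hx (isUnit_of_mul_isUnit_right ((IsUnit.neg_iff _).1 h))
  refine ⟨↑u⁻¹, ?_⟩
  rw [Submodule.mem_bot, mul_assoc, sub_eq_zero, ← mul_add_one, ← hu, Units.inv_mul]

end IsLocalRing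

section TorsionByNonunits

open Module

variable {Λ : Type*} [Ring Λ] {N M : Type*} [AddCommGroup N] [Module Λ N]
  [AddCommGroup M] [Module Λ M]

theorem isAtom_span_singleton_of_isTorsionBySet_nonunits
    (hN : IsTorsionBySet Λ N (nonunits Λ)) {v : N} (hv : v ≠ 0) : IsAtom (Λ ∙ v) := by
  refine ⟨by simpa using hv, fun T hT => ?_⟩
  by_contra hne
  obtain ⟨y, hyT, hy0⟩ := T.ne_bot_iff.mp hne
  obtain ⟨c, rfl⟩ := Submodule.mem_span_singleton.mp (hT.le hyT)
  have hc : IsUnit c := by_contra fun hc => hy0 (hN (a := ⟨c, hc⟩))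
  refine hT.not_ge (Submodule.span_singleton_le_iff_mem _ _ |>.mpr ?_)
  simpa [smul_smul] using T.smul_mem (↑hc.unit⁻¹) hyT

theorem isSemisimpleModule_of_isTorsionBySet_nonunits (hN : IsTorsionBySet Λ N (nonunits Λ)) :
    IsSemisimpleModule Λ N := by
  refine .of_sSup_simples_eq_top (eq_top_iff.2 fun v _ => ?_)
  rcases eq_or_ne v 0 with rfl | hv
  · exact zero_mem _
  · exact Submodule.mem_sSup_of_mem
      (isSimpleModule_iff_isAtom.2 (isAtom_span_singleton_of_isTorsionBySet_nonunits hN hv))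
      (Submodule.mem_span_singleton_self v)

theorem exists_linearMap_apply_eq_of_isTorsionBySet_nonunits
    (hN : IsTorsionBySet Λ N (nonunits Λ)) (hM : IsTorsionBySet Λ M (nonunits Λ))
    {v : N} (hv : v ≠ 0) (m : M) : ∃ ψ : N →ₗ[Λ] M, ψ v = m := by
  have := isSemisimpleModule_of_isTorsionBySet_nonunits hN
  let I := LinearMap.ker (LinearMap.toSpanSingleton Λ N v)
  have hI : I ≤ LinearMap.ker (LinearMap.toSpanSingleton Λ M m) := fun c hc => by
    by_cases hcu : IsUnit c
    · exact absurd (hcu.smul_eq_zero.1 hc) hv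
    · exact hM (a := ⟨c, hcu⟩)
  obtain ⟨ψ, hψ⟩ := IsSemisimpleModule.extension_property (I.liftQ _ le_rfl)
    (LinearMap.ker_eq_bot.1 (I.ker_liftQ_eq_bot _ _ le_rfl)) (I.liftQ _ hI)
  refine ⟨ψ, ?_⟩
  simpa using LinearMap.congr_fun hψ (Submodule.Quotient.mk 1)

end TorsionByNonunits

namespace CategoryTheory

variable {C : Type*} [Category C] [Abelian C] [EnoughProjectives C]

lemma ProjectiveResolution.exists_d_comp_eq_of_subsingleton_ext {X Y : C}
    (R : ProjectiveResolution X) [Subsingleton (((Ext ℤ C 1).obj (Opposite.op X)).obj Y)]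
    (φ : R.complex.X 1 ⟶ Y) (hφ : R.complex.d 2 1 ≫ φ = 0) :
    ∃ G : R.complex.X 0 ⟶ Y, R.complex.d 1 0 ≫ G = φ := by
  have hexact : (R.complex.linearYonedaObj ℤ Y).ExactAt 1 :=
    (HomologicalComplex.exactAt_iff_isZero_homology _ 1).2
      ((ModuleCat.isZero_of_subsingleton _).of_iso (R.isoExt 1 Y).symm)
  rw [HomologicalComplex.exactAt_iff' _ 0 1 2 (by simp) (by simp),
    ShortComplex.moduleCat_exact_iff] at hexact
  exact hexact φ hφ

/- Compare `S` with a projective resolution `R` of `S.X₃` by maps `α`, `β` over `S.X₃`. The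
cocycle `κ ≫ ψ` on `R` is a coboundary `d ≫ G`, and `σ` corrects `β ≫ α` to the identity. -/
lemma ShortComplex.ShortExact.exists_f_comp_eq_of_subsingleton_ext {S : ShortComplex C}
    (hS : S.ShortExact) [Projective S.X₂] {Y : C}
    [Subsingleton (((Ext ℤ C 1).obj (Opposite.op S.X₃)).obj Y)] (ψ : S.X₁ ⟶ Y) :
    ∃ F : S.X₂ ⟶ Y, S.f ≫ F = ψ := by
  have := hS.mono_f
  have := hS.epi_g
  let R := ProjectiveResolution.of S.X₃
  let ε : R.complex.X 0 ⟶ S.X₃ := R.π.f 0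
  have : Epi ε := inferInstanceAs (Epi (R.π.f 0))
  have hdε : R.complex.d 1 0 ≫ ε = 0 := R.complex_d_comp_π_f_zero
  let α : R.complex.X 0 ⟶ S.X₂ := Projective.factorThru ε S.g
  let β : S.X₂ ⟶ R.complex.X 0 := Projective.factorThru S.g ε
  have hα : α ≫ S.g = ε := Projective.factorThru_comp _ _
  have hβ : β ≫ ε = S.g := Projective.factorThru_comp _ _
  let κ : R.complex.X 1 ⟶ S.X₁ :=
    hS.exact.liftFromProjective (R.complex.d 1 0 ≫ α) (by simp [hα, hdε])
  have hκ : κ ≫ S.f = R.complex.d 1 0 ≫ α := hS.exact.liftFromProjective_comp _ _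
  obtain ⟨G, hG⟩ := R.exists_d_comp_eq_of_subsingleton_ext (κ ≫ ψ) (by
    suffices R.complex.d 2 1 ≫ κ = 0 by rw [reassoc_of% this, Limits.zero_comp]
    simp [← cancel_mono S.f, hκ])
  let σ : S.X₂ ⟶ S.X₁ := hS.exact.lift (𝟙 _ - β ≫ α) (by simp [hα, hβ])
  have hσ : σ ≫ S.f = 𝟙 _ - β ≫ α := hS.exact.lift_f _ _
  refine ⟨β ≫ G + σ ≫ ψ, ?_⟩
  obtain ⟨A, π, _, x, hx⟩ := R.exact₀.exact_up_to_refinements (S.f ≫ β)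
    (show (S.f ≫ β) ≫ ε = 0 by simp [hβ])
  have hx' : π ≫ S.f ≫ σ = π - x ≫ κ := by
    simp [← cancel_mono S.f, hσ, hκ, reassoc_of% hx]
  rw [← cancel_epi π]
  simp [reassoc_of% hx, hG, reassoc_of% hx', Preadditive.sub_comp]

end CategoryTheory

theorem LinearMap.exists_comp_subtype_eq_of_subsingleton_ext {Λ : Type u} [Ring Λ]
    {P M N : Type u} [AddCommGroup P] [Module Λ P] [Module.Projective Λ P]
    [AddCommGroup M] [Module Λ M] [AddCommGroup N] [Module Λ N]
    [Subsingleton (ExtGrp Λ (ModuleCat.of Λ M) (ModuleCat.of Λ N) 1)]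
    {π : P →ₗ[Λ] M} (hπ : Function.Surjective π) (ψ : LinearMap.ker π →ₗ[Λ] N) :
    ∃ F : P →ₗ[Λ] N, F ∘ₗ (LinearMap.ker π).subtype = ψ := by
  obtain ⟨F, hF⟩ := (LinearMap.shortExact_shortComplexKer hπ).exists_f_comp_eq_of_subsingleton_ext
    (Y := ModuleCat.of Λ N) (ModuleCat.ofHom ψ)
  exact ⟨F.hom, congrArg ModuleCat.Hom.hom hF⟩

/- A generating set of minimal cardinality: a relation with a unit coefficient would express one
generator through the others. -/
theorem Module.Finite.exists_finset_span_eq_top_ker_not_isUnit (Λ M : Type*) [Ring Λ]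
    [AddCommGroup M] [Module Λ M] [Module.Finite Λ M] :
    ∃ S : Finset M, Submodule.span Λ (S : Set M) = ⊤ ∧
      ∀ x ∈ LinearMap.ker (Fintype.linearCombination Λ ((↑) : S → M)), ∀ i, ¬IsUnit (x i) := by
  classical
  obtain ⟨S, hS, hmin⟩ := (measure (Finset.card : Finset M → ℕ)).wf.has_min
    {S | Submodule.span Λ (S : Set M) = ⊤} (Module.finite_def.1 ‹_›)
  refine ⟨S, hS, fun x hx j hj => hmin (S.erase j) ?_ (Finset.card_erase_lt_of_mem j.2)⟩
  have hxj : x j • (j : M) ∈ Submodule.span Λ (S.erase j : Set M) := by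
    have hsum := Finset.add_sum_erase Finset.univ (fun i => x i • (i : M)) (Finset.mem_univ j)
    rw [← Fintype.linearCombination_apply, LinearMap.mem_ker.1 hx] at hsum
    rw [eq_neg_of_add_eq_zero_left hsum]
    refine neg_mem (Submodule.sum_mem _ fun i hi =>
      Submodule.smul_mem _ _ (Submodule.subset_span ?_))
    exact Finset.mem_erase.2 ⟨fun h => (Finset.mem_erase.1 hi).1 (Subtype.ext h), i.2⟩
  have hj' : (j : M) ∈ Submodule.span Λ (S.erase j : Set M) := by
    simpa [smul_smul] using Submodule.smul_mem _ (↑hj.unit⁻¹) hxj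
  show Submodule.span Λ _ = ⊤
  rw [eq_top_iff, ← hS, Submodule.span_le]
  intro y hy
  rcases eq_or_ne y j with rfl | hyj
  · exact hj'
  · exact Submodule.subset_span (Finset.mem_erase.2 ⟨hyj, hy⟩)

theorem eq_zero_of_not_isUnit_of_subsingleton_ext {Λ : Type u} [Ring Λ]
    (hJ : ∀ a b : Λ, ¬IsUnit a → ¬IsUnit b → a * b = 0)
    {M : Type u} [AddCommGroup M] [Module Λ M] [Module.Finite Λ M] [Nontrivial M]
    (hM : Module.IsTorsionBySet Λ M (nonunits Λ))
    [Subsingleton (ExtGrp Λ (ModuleCat.of Λ M) (ModuleCat.of Λ M) 1)]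
    {a : Λ} (ha : ¬IsUnit a) : a = 0 := by
  classical
  by_contra ha0
  obtain ⟨S, hS, hker⟩ := Module.Finite.exists_finset_span_eq_top_ker_not_isUnit Λ M
  let π := Fintype.linearCombination Λ ((↑) : S → M)
  have hπ : Function.Surjective π := by
    rw [← LinearMap.range_eq_top, Fintype.range_linearCombination, Subtype.range_coe, hS]
  have hK : Module.IsTorsionBySet Λ (LinearMap.ker π) (nonunits Λ) := fun x b =>
    Subtype.ext (funext fun i => hJ b _ b.2 (hker x x.2 i))
  obtain ⟨j⟩ : Nonempty S := by
    by_contra hS0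
    rw [not_nonempty_iff, Finset.isEmpty_coe_sort] at hS0
    simp [hS0] at hS
  let v : S → Λ := a • Pi.single j 1
  have hv : v ∈ LinearMap.ker π := by simp [v, π, hM (a := ⟨a, ha⟩)]
  have hv0 : (⟨v, hv⟩ : LinearMap.ker π) ≠ 0 := fun h => ha0 <| by
    simpa [v] using congrFun (congrArg Subtype.val h) j
  obtain ⟨m, hm⟩ := exists_ne (0 : M)
  obtain ⟨ψ, hψ⟩ := exists_linearMap_apply_eq_of_isTorsionBySet_nonunits hK hM hv0 m
  obtain ⟨F, hF⟩ := LinearMap.exists_comp_subtype_eq_of_subsingleton_ext hπ ψ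
  apply hm
  calc m = ψ ⟨v, hv⟩ := hψ.symm
    _ = a • F (Pi.single j 1) := by rw [← hF]; simp [v]
    _ = 0 := hM (a := ⟨a, ha⟩)

theorem IsIndecomposableModule.projective_of_surjective {Λ : Type u} [Ring Λ]
    {M Q : Type u} [AddCommGroup M] [Module Λ M] [AddCommGroup Q] [Module Λ Q]
    [Module.Projective Λ Q] [Nontrivial Q] (hM : IsIndecomposableModule Λ M)
    {p : M →ₗ[Λ] Q} (hp : Function.Surjective p) : Module.Projective Λ M := by
  obtain ⟨s, hs⟩ := Module.projective_lifting_property p LinearMap.id hp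
  have hidem : IsIdempotentElem (s ∘ₗ p) := by
    rw [IsIdempotentElem, Module.End.mul_eq_comp, LinearMap.comp_assoc,
      ← LinearMap.comp_assoc p s p, hs, LinearMap.id_comp]
  rcases hM.2 _ _ (LinearMap.IsIdempotentElem.isCompl hidem) with h | h
  · obtain ⟨q, hq⟩ := exists_ne (0 : Q)
    obtain ⟨x, rfl⟩ := hp q
    refine absurd ?_ hq
    have : s (p x) = 0 := (Submodule.mem_bot Λ).1 (h ▸ LinearMap.mem_range_self (s ∘ₗ p) x)
    simpa [this] using (LinearMap.congr_fun hs (p x)).symm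
  · have hinj : Function.Injective p :=
      .of_comp (f := s) (LinearMap.ker_eq_bot.1 h : Function.Injective (s ∘ₗ p))
    exact .of_equiv (LinearEquiv.ofBijective p ⟨hinj, hp⟩).symm

theorem stmt2_general (Λ : Type u) [Ring Λ] [IsLocalRing Λ]
    (hJ : ∀ a ∈ (⊥ : Ideal Λ).jacobson, ∀ b ∈ (⊥ : Ideal Λ).jacobson, a * b = 0)
    (M : Type u) [AddCommGroup M] [Module Λ M] [Module.Finite Λ M]
    (hind : IsIndecomposableModule Λ M) (htl : IsTorsionless Λ M)
    (hext : Subsingleton (ExtGrp Λ (ModuleCat.of Λ M) (ModuleCat.of Λ M) 1)) :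
    Module.Projective Λ M := by
  obtain ⟨n, f, hf⟩ := htl
  have hJ' : ∀ a b : Λ, ¬IsUnit a → ¬IsUnit b → a * b = 0 := fun a b ha hb =>
    hJ a (IsLocalRing.mem_jacobson_bot_of_not_isUnit ha) b
      (IsLocalRing.mem_jacobson_bot_of_not_isUnit hb)
  by_cases hunit : ∃ x i, IsUnit (f x i)
  · obtain ⟨x, i, hu⟩ := hunit
    refine hind.projective_of_surjective (p := LinearMap.proj i ∘ₗ f) fun c =>
      ⟨(c * ↑hu.unit⁻¹) • x, ?_⟩
    simp [mul_assoc]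
  · push Not at hunit
    have hM : Module.IsTorsionBySet Λ M (nonunits Λ) := fun x a =>
      hf <| by ext i; simp [hJ' a _ a.2 (hunit x i)]
    have := hind.1
    obtain ⟨x, hx⟩ := exists_ne (0 : M)
    refine absurd (hf ?_) hx
    ext i
    simp [eq_zero_of_not_isUnit_of_subsingleton_ext hJ' hM (hunit x i)]

theorem stmt2 (K : Type u) [Field K] (Λ : Type u) [Ring Λ] [Algebra K Λ]
    [FiniteDimensional K Λ] [IsLocalRing Λ]
    (hJ : ∀ a ∈ (⊥ : Ideal Λ).jacobson, ∀ b ∈ (⊥ : Ideal Λ).jacobson, a * b = 0)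
    (M : Type u) [AddCommGroup M] [Module Λ M] [Module.Finite Λ M]
    (hind : IsIndecomposableModule Λ M) (htl : IsTorsionless Λ M)
    (hext : Subsingleton (ExtGrp Λ (ModuleCat.of Λ M) (ModuleCat.of Λ M) 1)) :
    Module.Projective Λ M :=
  stmt2_general Λ hJ M hind htl hext
end

section
/- Let Λ be a local Artinian algebra with J(Λ)² = 0. Then every finitely generated torsionless Λ-module M with Ext¹_Λ(M, M) = 0 is projective. -/
open CategoryTheory

universe u

/-!
Write `J` for the radical of `Λ` and `k = Λ ⧸ J`. Every module killed by `J` is semisimple, with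
all simple summands isomorphic to `k`. Peeling off, one at a time, the coordinates of `M ↪ Λⁿ` that
take a unit value splits `M ≅ Λᵃ ⊕ N` with `N ↪ Jⁿ`, so `N` is killed by `J` as `J² = 0`. Hence
either `M` is free, or `k` is a direct summand of `M` and `Ext¹(k, k)` is a summand of
`Ext¹(M, M) = 0`. The latter is impossible when `J ≠ 0`: from `0 → J → Λ → k → 0`, the vanishing of
`Ext¹(k, k)` would extend a nonzero map `J → k` to `Λ → k`, but every map `Λ → k` kills `J`.
When `J = 0`, `Λ` is semisimple and every module is projective.
-/

open Limits

namespace IsLocalRing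

variable {Λ : Type*} [Ring Λ] [IsLocalRing Λ]

theorem le_jacobson_of_ne_top {I : Ideal Λ} (hI : I ≠ ⊤) : I ≤ Ring.jacobson Λ := by
  refine le_sInf fun m hm => ?_
  by_contra hIm
  obtain ⟨y, hy, z, hz, hyz⟩ := Submodule.mem_sup.mp ((hm.2 _ (right_lt_sup.mpr hIm)).symm ▸
    Submodule.mem_top : (1 : Λ) ∈ I ⊔ m)
  rcases isUnit_or_isUnit_of_add_one hyz with hu | hu
  · exact hI (Ideal.eq_top_of_isUnit_mem I hy hu)
  · exact hm.1 (Ideal.eq_top_of_isUnit_mem m hz hu)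

theorem isCoatom_jacobson : IsCoatom (Ring.jacobson Λ) :=
  ⟨(Ring.jacobson_lt_top Λ).ne, fun _ hI => by_contra fun h => hI.not_ge (le_jacobson_of_ne_top h)⟩

instance : IsSimpleModule Λ (Λ ⧸ Ring.jacobson Λ) :=
  isSimpleModule_iff_isCoatom.mpr isCoatom_jacobson

theorem span_singleton_eq_top_of_notMem_jacobson {x : Λ} (hx : x ∉ Ring.jacobson Λ) :
    Ideal.span {x} = ⊤ :=
  by_contra fun h => hx (le_jacobson_of_ne_top h (Ideal.mem_span_singleton_self x))

theorem isSemisimpleRing_of_jacobson_eq_bot (h : Ring.jacobson Λ = ⊥) : IsSemisimpleRing Λ :=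
  have : IsSimpleModule Λ Λ := .congr (Submodule.quotEquivOfEqBot _ h).symm
  inferInstance

variable {M : Type*} [AddCommGroup M] [Module Λ M]

theorem ker_toSpanSingleton_eq_jacobson (hM : Ring.jacobson Λ ≤ Module.annihilator Λ M)
    {x : M} (hx : x ≠ 0) : LinearMap.ker (LinearMap.toSpanSingleton Λ M x) = Ring.jacobson Λ := by
  have hJ : Ring.jacobson Λ ≤ LinearMap.ker (LinearMap.toSpanSingleton Λ M x) :=
    fun a ha => Module.mem_annihilator.mp (hM ha) x
  refine (isCoatom_jacobson.le_iff.mp hJ).resolve_left fun htop => hx ?_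
  simpa using LinearMap.mem_ker.mp (htop ▸ Submodule.mem_top : (1 : Λ) ∈ LinearMap.ker
    (LinearMap.toSpanSingleton Λ M x))

theorem isSemisimpleModule_of_jacobson_le_annihilator
    (hM : Ring.jacobson Λ ≤ Module.annihilator Λ M) : IsSemisimpleModule Λ M := by
  refine IsSemisimpleModule.of_sSup_simples_eq_top (eq_top_iff.mpr fun x _ => ?_)
  rcases eq_or_ne x 0 with rfl | hx
  · exact zero_mem _
  refine le_sSup (α := Submodule Λ M) (s := {m | IsSimpleModule Λ m})
    (?_ : IsSimpleModule Λ (Λ ∙ x)) (Submodule.mem_span_singleton_self x)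
  exact .congr <| (LinearEquiv.ofEq _ _ (LinearMap.span_singleton_eq_range Λ M x)).trans <|
    (LinearMap.quotKerEquivRange _).symm.trans
      (Submodule.quotEquivOfEq _ _ (ker_toSpanSingleton_eq_jacobson hM hx))

theorem exists_residue_retraction (hM : Ring.jacobson Λ ≤ Module.annihilator Λ M)
    {x : M} (hx : x ≠ 0) :
    ∃ (s : (Λ ⧸ Ring.jacobson Λ) →ₗ[Λ] M) (r : M →ₗ[Λ] Λ ⧸ Ring.jacobson Λ),
      r ∘ₗ s = LinearMap.id := by
  have := isSemisimpleModule_of_jacobson_le_annihilator hM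
  have hker := ker_toSpanSingleton_eq_jacobson hM hx
  let s := (Ring.jacobson Λ).liftQ (LinearMap.toSpanSingleton Λ M x) hker.ge
  obtain ⟨r, hr⟩ := IsSemisimpleModule.extension_property s
    (LinearMap.ker_eq_bot.mp (Submodule.ker_liftQ_eq_bot' _ _ hker.symm)) LinearMap.id
  exact ⟨s, r, hr⟩

end IsLocalRing

section Torsionless

variable {Λ : Type*} [Ring Λ] {M : Type*} [AddCommGroup M] [Module Λ M]

theorem LinearMap.nonempty_linearEquiv_ker_prod_of_surjective {P : Type*} [AddCommGroup P]
    [Module Λ P] [Module.Projective Λ P] (g : M →ₗ[Λ] P) (hg : Function.Surjective g) :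
    Nonempty (M ≃ₗ[Λ] LinearMap.ker g × P) :=
  let ⟨s, hs⟩ := Module.projective_lifting_property g LinearMap.id hg
  ⟨((LinearMap.exact_subtype_ker_map g).splitSurjectiveEquiv Subtype.val_injective ⟨s, hs⟩).1⟩

theorem injective_funLeft_succAbove_comp_ker_subtype {n : ℕ} {f : M →ₗ[Λ] Fin (n + 1) → Λ}
    (hf : Function.Injective f) (i : Fin (n + 1)) :
    Function.Injective (LinearMap.funLeft Λ Λ i.succAbove ∘ₗ f ∘ₗ
      (LinearMap.ker (LinearMap.proj i ∘ₗ f)).subtype) := by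
  refine (injective_iff_map_eq_zero _).mpr fun y hy => Subtype.ext (hf ?_)
  rw [Submodule.coe_zero, map_zero]
  funext l
  rcases i.eq_self_or_eq_succAbove l with rfl | ⟨j, rfl⟩
  · exact y.2
  · exact congrFun hy j

open IsLocalRing in
theorem projective_or_exists_residue_retraction_of_injective [IsLocalRing Λ]
    (hJ : ∀ a ∈ Ring.jacobson Λ, ∀ b ∈ Ring.jacobson Λ, a * b = 0) {n : ℕ}
    (f : M →ₗ[Λ] Fin n → Λ) (hf : Function.Injective f) :
    Module.Projective Λ M ∨ ∃ (s : (Λ ⧸ Ring.jacobson Λ) →ₗ[Λ] M)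
      (r : M →ₗ[Λ] Λ ⧸ Ring.jacobson Λ), r ∘ₗ s = LinearMap.id := by
  induction n generalizing M with
  | zero =>
    have : Subsingleton M := hf.subsingleton
    exact .inl inferInstance
  | succ n ih =>
    by_cases hcoord : ∃ m i, f m i ∉ Ring.jacobson Λ
    · obtain ⟨m, i, hmi⟩ := hcoord
      let g := LinearMap.proj i ∘ₗ f
      have hg : Function.Surjective g := LinearMap.range_eq_top.mp <| top_le_iff.mp <|
        span_singleton_eq_top_of_notMem_jacobson hmi ▸
          Submodule.span_le.mpr (Set.singleton_subset_iff.mpr ⟨m, rfl⟩)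
      obtain ⟨e⟩ := g.nonempty_linearEquiv_ker_prod_of_surjective hg
      rcases ih _ (injective_funLeft_succAbove_comp_ker_subtype hf i) with hP | ⟨s, r, hsr⟩
      · exact .inl (.of_equiv e.symm)
      · refine .inr ⟨e.symm ∘ₗ LinearMap.inl Λ _ Λ ∘ₗ s, r ∘ₗ LinearMap.fst Λ _ Λ ∘ₗ e, ?_⟩
        exact LinearMap.ext fun z => by simpa using LinearMap.congr_fun hsr z
    · push Not at hcoord
      have hM : Ring.jacobson Λ ≤ Module.annihilator Λ M := fun a ha =>
        Module.mem_annihilator.mpr fun m => hf <| by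
          rw [map_smul, map_zero]
          funext i
          exact hJ a ha _ (hcoord m i)
      rcases subsingleton_or_nontrivial M with hM0 | hM0
      · exact .inl inferInstance
      · obtain ⟨x, hx⟩ := exists_ne (0 : M)
        exact .inr (exists_residue_retraction hM hx)

end Torsionless

namespace CategoryTheory

variable {C : Type*} [Category C] [Abelian C] [EnoughProjectives C]

theorem Retract.subsingleton_ext {R : Type*} [Ring R] [Linear R C] {A B : C} (h : Retract A B)
    (n : ℕ) [Subsingleton (((Ext R C n).obj (.op B)).obj B)] :
    Subsingleton (((Ext R C n).obj (.op A)).obj A) :=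
  let hAB : Retract ((.op A, A) : Cᵒᵖ × C) (.op B, B) :=
    ⟨(h.op.i, h.i), (h.op.r, h.r), Prod.ext h.op.retract h.retract⟩
  let hExt := hAB.map (Functor.uncurry.obj (Ext R C n))
  @Function.Injective.subsingleton _ _ _
    (Function.LeftInverse.injective (g := hExt.r) fun x => ConcreteCategory.congr_hom hExt.retract x)
    ‹Subsingleton (((Ext R C n).obj (.op B)).obj B)›

theorem Projective.d_comp {X Y : C} (f : X ⟶ Y) : Projective.d f ≫ f = 0 :=
  (Category.assoc _ _ _).trans ((congrArg _ (kernel.condition f)).trans comp_zero)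

noncomputable section

namespace ProjectiveResolution

variable {Z P₀ : C} (π : P₀ ⟶ Z)

-- `ProjectiveResolution.ofComplex`, with the chosen cover `Projective.π Z` replaced by `π`.
def ofEpiComplex : ChainComplex C ℕ :=
  ChainComplex.mk' P₀ (Projective.syzygies π) (Projective.d π)
    fun f => ⟨_, Projective.d f, Projective.d_comp f⟩

lemma ofEpiComplex_d_1_0 : (ofEpiComplex π).d 1 0 = Projective.d π := by
  simp [ofEpiComplex]

lemma ofEpiComplex_exactAt_succ (n : ℕ) : (ofEpiComplex π).ExactAt (n + 1) := by
  rw [HomologicalComplex.exactAt_iff' _ (n + 1 + 1) (n + 1) n (by simp) (by simp)]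
  refine (ShortComplex.exact_iff_of_iso ?_).2 (exact_d_f ((ofEpiComplex π).d (n + 1) n))
  refine ShortComplex.isoMk (ChainComplex.mk'XIso P₀ (Projective.syzygies π) (Projective.d π)
    (fun f => ⟨_, Projective.d f, Projective.d_comp f⟩) n) (Iso.refl _) (Iso.refl _) ?_ ?_
  · exact (ChainComplex.mk'_d _ _ _ _ n).symm.trans (Category.comp_id _).symm
  · exact (Category.id_comp _).trans (Category.comp_id _).symm

instance [Projective P₀] (n : ℕ) : Projective ((ofEpiComplex π).X n) := by
  obtain (_ | _ | _ | n) := n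
  · exact inferInstanceAs (Projective P₀)
  all_goals apply Projective.projective_over

def ofEpi [Projective P₀] [Epi π] : ProjectiveResolution Z where
  complex := ofEpiComplex π
  π := (ChainComplex.toSingle₀Equiv _ _).symm ⟨π, by
    rw [ofEpiComplex_d_1_0]; exact Projective.d_comp π⟩
  quasiIso := ⟨fun n => by
    cases n
    · rw [ChainComplex.quasiIsoAt₀_iff, ShortComplex.quasiIso_iff_of_zeros']
      · refine (ShortComplex.exact_and_epi_g_iff_of_iso ?_).2
          ⟨exact_d_f π, by dsimp; infer_instance⟩
        exact ShortComplex.isoMk (Iso.refl _) (Iso.refl _) (Iso.refl _)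
          (by
            simp only [ofEpiComplex, Iso.refl_hom, HomologicalComplex.shortComplexFunctor'_obj_f,
              ChainComplex.mk'_d_1_0]
            exact (Category.id_comp _).trans (Category.comp_id _).symm)
          (by
            simp only [Iso.refl_hom, HomologicalComplex.shortComplexFunctor'_map_τ₂]
            erw [Category.id_comp, Category.comp_id, ChainComplex.toSingle₀Equiv_symm_apply_f_zero])
      all_goals rfl
    · rw [quasiIsoAt_iff_exactAt']
      · apply ofEpiComplex_exactAt_succ
      · apply ChainComplex.exactAt_succ_single_obj⟩

end ProjectiveResolution

theorem exists_kernel_ι_comp_eq_of_subsingleton_ext_one {R : Type*} [Ring R] [Linear R C]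
    {Z P₀ Y : C} (π : P₀ ⟶ Z) [Projective P₀] [Epi π]
    [Subsingleton (((Ext R C 1).obj (.op Z)).obj Y)] (ψ : kernel π ⟶ Y) :
    ∃ g : P₀ ⟶ Y, kernel.ι π ≫ g = ψ := by
  let P := ProjectiveResolution.ofEpi π
  let L := P.complex.linearYonedaObj R Y
  have : Subsingleton (L.homology 1) :=
    ((forget (ModuleCat R)).mapIso (P.isoExt 1 Y)).toEquiv.symm.subsingleton
  have hL : L.ExactAt 1 := (HomologicalComplex.exactAt_iff_isZero_homology _ _).mpr
    (ModuleCat.isZero_of_subsingleton _)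
  rw [HomologicalComplex.exactAt_iff' L 0 1 2 (by simp) (by simp),
    ShortComplex.moduleCat_exact_iff] at hL
  let q : P.complex.X 1 ⟶ kernel π := Projective.π (kernel π)
  have hd : P.complex.d 1 0 = q ≫ kernel.ι π := ProjectiveResolution.ofEpiComplex_d_1_0 π
  have hq : P.complex.d 2 1 ≫ q = 0 := (cancel_mono (kernel.ι π)).mp <|
    (Category.assoc _ _ _).trans <| (congrArg _ hd.symm).trans <|
      (P.complex.d_comp_d 2 1 0).trans zero_comp.symm
  -- `q ≫ ψ` is a 1-cocycle of `Hom(P, Y)`, hence a coboundary since `Ext¹(Z, Y) = 0`.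
  obtain ⟨γ, hγ⟩ := hL (q ≫ ψ : P.complex.X 1 ⟶ Y) (by
    show P.complex.d 2 1 ≫ q ≫ ψ = 0
    rw [← Category.assoc, hq, zero_comp])
  have hγ' : q ≫ kernel.ι π ≫ (γ : P₀ ⟶ Y) = q ≫ ψ :=
    (Category.assoc _ _ _).symm.trans <| (congrArg (· ≫ _) hd.symm).trans hγ
  have : Epi q := Projective.π_epi _
  exact ⟨γ, (cancel_epi q).mp hγ'⟩

end

end CategoryTheory

theorem LinearMap.map_eq_zero_of_mem_annihilator {R N : Type*} [Ring R] [AddCommGroup N]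
    [Module R N] (g : R →ₗ[R] N) {a : R} (ha : a ∈ Module.annihilator R N) : g a = 0 := by
  rw [← mul_one a, ← smul_eq_mul, map_smul]
  exact Module.mem_annihilator.mp ha _

theorem LinearMap.exists_comp_ker_subtype_eq_of_subsingleton_ext_one {Λ : Type u} [Ring Λ]
    {P Z Y : Type u} [AddCommGroup P] [Module Λ P] [Module.Projective Λ P] [AddCommGroup Z]
    [Module Λ Z] [AddCommGroup Y] [Module Λ Y]
    [Subsingleton (((Ext ℤ (ModuleCat.{u} Λ) 1).obj (.op (.of Λ Z))).obj (.of Λ Y))]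
    (π : P →ₗ[Λ] Z) (hπ : Function.Surjective π) (ψ : LinearMap.ker π →ₗ[Λ] Y) :
    ∃ g : P →ₗ[Λ] Y, g ∘ₗ (LinearMap.ker π).subtype = ψ := by
  have : Projective (ModuleCat.of Λ P) := (IsProjective.iff_projective P).mp inferInstance
  have : Epi (ModuleCat.ofHom π) := (ModuleCat.epi_iff_surjective _).mpr hπ
  obtain ⟨g, hg⟩ := exists_kernel_ι_comp_eq_of_subsingleton_ext_one (R := ℤ) (ModuleCat.ofHom π)
    ((ModuleCat.kernelIsoKer _).hom ≫ ModuleCat.ofHom ψ)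
  refine ⟨g.hom, ?_⟩
  have h := congrArg ((ModuleCat.kernelIsoKer _).inv ≫ ·) hg
  rw [← Category.assoc, ModuleCat.kernelIsoKer_inv_kernel_ι, Iso.inv_hom_id_assoc] at h
  exact congrArg ModuleCat.Hom.hom h

theorem IsLocalRing.not_subsingleton_ext_one_residue {Λ : Type u} [Ring Λ] [IsLocalRing Λ]
    (hJ : ∀ a ∈ Ring.jacobson Λ, ∀ b ∈ Ring.jacobson Λ, a * b = 0) (hJ0 : Ring.jacobson Λ ≠ ⊥) :
    ¬ Subsingleton (((Ext ℤ (ModuleCat.{u} Λ) 1).obj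
      (.op (.of Λ (Λ ⧸ Ring.jacobson Λ)))).obj (.of Λ (Λ ⧸ Ring.jacobson Λ))) := by
  intro hext
  let J := Ring.jacobson Λ
  obtain ⟨x, hxJ, hx0⟩ := Submodule.exists_mem_ne_zero_of_ne_bot hJ0
  have hJJ : J ≤ Module.annihilator Λ J := fun a ha =>
    Module.mem_annihilator.mpr fun b => Subtype.ext (hJ a ha b b.2)
  obtain ⟨s, r, hsr⟩ := exists_residue_retraction hJJ (x := ⟨x, hxJ⟩) (by simpa using hx0)
  let e : LinearMap.ker J.mkQ ≃ₗ[Λ] J := .ofEq _ _ J.ker_mkQ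
  obtain ⟨g, hg⟩ := J.mkQ.exists_comp_ker_subtype_eq_of_subsingleton_ext_one
    J.mkQ_surjective (r ∘ₗ e.toLinearMap)
  have hr : r = 0 := LinearMap.ext fun y => by
    have hy : r y = g (e.symm y) := by simpa using (LinearMap.congr_fun hg (e.symm y)).symm
    rw [hy, LinearMap.zero_apply]
    exact g.map_eq_zero_of_mem_annihilator (Ideal.annihilator_quotient.ge y.2)
  have := IsSimpleModule.nontrivial Λ (Λ ⧸ J)
  obtain ⟨z, hz⟩ := exists_ne (0 : Λ ⧸ J)
  exact hz (by simpa [hr] using (LinearMap.congr_fun hsr z).symm)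

theorem stmt3_general (Λ : Type u) [Ring Λ] [IsLocalRing Λ]
    (hJ : ∀ a ∈ (⊥ : Ideal Λ).jacobson, ∀ b ∈ (⊥ : Ideal Λ).jacobson, a * b = 0)
    (M : Type u) [AddCommGroup M] [Module Λ M]
    (htl : IsTorsionless Λ M)
    (hext : Subsingleton (ExtGrp Λ (ModuleCat.of Λ M) (ModuleCat.of Λ M) 1)) :
    Module.Projective Λ M := by
  rw [Ideal.jacobson_bot] at hJ
  by_cases hJ0 : Ring.jacobson Λ = ⊥
  · have := IsLocalRing.isSemisimpleRing_of_jacobson_eq_bot hJ0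
    exact Module.projective_of_isSemisimpleRing Λ M
  obtain ⟨n, f, hf⟩ := htl
  refine (projective_or_exists_residue_retraction_of_injective hJ f hf).resolve_right ?_
  rintro ⟨s, r, hsr⟩
  let hk : Retract (ModuleCat.of Λ (Λ ⧸ Ring.jacobson Λ)) (ModuleCat.of Λ M) :=
    ⟨ModuleCat.ofHom s, ModuleCat.ofHom r, ModuleCat.hom_ext hsr⟩
  exact IsLocalRing.not_subsingleton_ext_one_residue hJ hJ0 (hk.subsingleton_ext 1)

theorem stmt3 (K : Type u) [Field K] (Λ : Type u) [Ring Λ] [Algebra K Λ]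
    [FiniteDimensional K Λ] [IsLocalRing Λ]
    (hJ : ∀ a ∈ (⊥ : Ideal Λ).jacobson, ∀ b ∈ (⊥ : Ideal Λ).jacobson, a * b = 0)
    (M : Type u) [AddCommGroup M] [Module Λ M] [Module.Finite Λ M]
    (htl : IsTorsionless Λ M)
    (hext : Subsingleton (ExtGrp Λ (ModuleCat.of Λ M) (ModuleCat.of Λ M) 1)) :
    Module.Projective Λ M :=
  stmt3_general Λ hJ M htl hext
end

section
/- Let Λ be an Artinian algebra and M a finitely generated, faithful, indecomposable Λ-module. If M is torsionless, then M is projective. -/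
/-!
Since `M` has finite length and is indecomposable, Fitting's lemma makes every endomorphism of `M`
a unit or nilpotent, so the non-units of `End M` lie in its Jacobson radical `J`, which is
nilpotent because `End M` is finite-dimensional; in particular some `z ≠ 0` is killed by `J`.
Composing an embedding `M ↪ Λⁿ` with the maps `λ ↦ λ • x` (`x ∈ M`) gives endomorphisms of `M`
which, `M` being faithful, jointly separate points. One of them does not kill `z`, so it is a
unit, and the corresponding coordinate `M → Λ` is a split monomorphism: `M` is a direct summand
of `Λ`.
-/

universe u

namespace IsIndecomposableModule

variable {R M : Type u} [Ring R] [AddCommGroup M] [Module R M] [IsArtinian R M]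
  [IsNoetherian R M]

theorem isUnit_or_isNilpotent (hM : IsIndecomposableModule R M)
    (f : Module.End R M) : IsUnit f ∨ IsNilpotent f := by
  obtain ⟨n, hcompl, hn⟩ := (f.eventually_isCompl_ker_pow_range_pow.and
    (Filter.eventually_ge_atTop 1)).exists
  rcases hM.2 _ _ hcompl with hker | hrange
  · left
    rw [← isUnit_pow_iff (n := n) (by omega), Module.End.isUnit_iff]
    exact IsArtinian.bijective_of_injective_endomorphism _ (LinearMap.ker_eq_bot.mp hker)
  · exact .inr ⟨n, LinearMap.range_eq_bot.mp hrange⟩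

theorem mem_jacobson_of_not_isUnit (hM : IsIndecomposableModule R M)
    {f : Module.End R M} (hf : ¬IsUnit f) : f ∈ Ring.jacobson (Module.End R M) := by
  rw [← Ideal.jacobson_bot, Ideal.mem_jacobson_iff]
  intro g
  have hgf : ¬IsUnit (g * f) := fun hu => hf <| (Module.End.isUnit_iff f).mpr <|
    IsArtinian.bijective_of_injective_endomorphism f
      (Function.Injective.of_comp (f := g) ((Module.End.isUnit_iff _).mp hu).injective)
  obtain ⟨u, hu⟩ := ((hM.isUnit_or_isNilpotent _).resolve_left hgf).isUnit_add_one
  refine ⟨↑u⁻¹, ?_⟩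
  rw [Submodule.mem_bot, mul_assoc, ← mul_add_one, ← hu, Units.inv_mul, sub_self]

end IsIndecomposableModule

theorem Module.End.isArtinianRing_of_finiteDimensional (K : Type*) {R M : Type*} [Field K]
    [Ring R] [Algebra K R] [AddCommGroup M] [Module R M] [Module K M] [IsScalarTower K R M]
    [FiniteDimensional K M] : IsArtinianRing (Module.End R M) :=
  have : FiniteDimensional K (Module.End R M) :=
    .of_injective (LinearMap.restrictScalarsₗ K R M M K) (LinearMap.restrictScalars_injective K)
  IsArtinianRing.of_finite K _

theorem exists_ne_zero_forall_mem_jacobson_smul_eq_zero (A : Type*) (M : Type*) [Ring A]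
    [IsArtinianRing A] [AddCommGroup M] [Module A M] [Nontrivial M] :
    ∃ z : M, z ≠ 0 ∧ ∀ a ∈ Ring.jacobson A, a • z = 0 := by
  by_contra! hJ
  obtain ⟨b, hb⟩ := IsArtinianRing.isNilpotent_jacobson_bot (R := A)
  rw [Ideal.jacobson_bot] at hb
  have hpow : ∀ c : ℕ, ∀ z : M, (∀ a ∈ Ring.jacobson A ^ c, a • z = 0) → z = 0 := by
    intro c
    induction c with
    | zero => exact fun z hz => by simpa using hz 1 (by simp [Submodule.pow_zero])
    | succ c ih =>
      refine fun z hz => by_contra fun hz0 => ?_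
      obtain ⟨f, hf, hfz⟩ := hJ z hz0
      refine hfz (ih _ fun a ha => ?_)
      rw [← mul_smul]
      exact hz _ (by rw [Submodule.pow_succ]; exact Submodule.mul_mem_mul ha hf)
  obtain ⟨z, hz⟩ := exists_ne (0 : M)
  refine hz (hpow b z fun a ha => ?_)
  rw [hb, Submodule.zero_eq_bot, Submodule.mem_bot] at ha
  rw [ha, zero_smul]

theorem Module.Projective.of_isUnit_comp {R P M : Type*} [Ring R] [AddCommGroup P] [Module R P]
    [Module.Projective R P] [AddCommGroup M] [Module R M] (g : M →ₗ[R] P) (h : P →ₗ[R] M)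
    (hu : IsUnit (h ∘ₗ g : Module.End R M)) : Module.Projective R M :=
  .of_split g (↑hu.unit⁻¹ ∘ₗ h) hu.unit.inv_mul

theorem exists_toSpanSingleton_comp_proj_comp_apply_ne_zero {R M ι : Type*} [Ring R]
    [AddCommGroup M] [Module R M] (hfaith : Module.annihilator R M = ⊥) {F : M →ₗ[R] ι → R}
    (hF : Function.Injective F) {z : M} (hz : z ≠ 0) :
    ∃ i x, (LinearMap.toSpanSingleton R M x ∘ₗ LinearMap.proj i ∘ₗ F) z ≠ 0 := by
  by_contra! h
  refine hz (hF ?_)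
  ext i
  have hann : F z i ∈ Module.annihilator R M :=
    Module.mem_annihilator.mpr fun x => by simpa using h i x
  simpa [hfaith] using hann

theorem stmt4 (K : Type u) [Field K] (Λ : Type u) [Ring Λ] [Algebra K Λ]
    [FiniteDimensional K Λ]
    (M : Type u) [AddCommGroup M] [Module Λ M] [Module.Finite Λ M]
    (hfaith : Module.annihilator Λ M = ⊥)
    (hind : IsIndecomposableModule Λ M) (htl : IsTorsionless Λ M) :
    Module.Projective Λ M := by
  let : Module K M := .compHom M (algebraMap K Λ)
  have : IsScalarTower K Λ M := .of_algebraMap_smul fun _ _ => rfl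
  have : FiniteDimensional K M := Module.Finite.trans Λ M
  have : IsNoetherian Λ M := isNoetherian_of_tower K inferInstance
  have : IsArtinian Λ M := isArtinian_of_tower K inferInstance
  have : IsArtinianRing (Module.End Λ M) :=
    Module.End.isArtinianRing_of_finiteDimensional K
  have := hind.1
  obtain ⟨n, F, hF⟩ := htl
  obtain ⟨z, hz, hJz⟩ := exists_ne_zero_forall_mem_jacobson_smul_eq_zero (Module.End Λ M) M
  obtain ⟨i, x, hix⟩ := exists_toSpanSingleton_comp_proj_comp_apply_ne_zero hfaith hF hz
  refine .of_isUnit_comp (LinearMap.proj i ∘ₗ F) (LinearMap.toSpanSingleton Λ M x) ?_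
  by_contra hu
  exact hix (hJz _ (hind.mem_jacobson_of_not_isUnit hu))
end

section
/- Let Λ be a left Artinian ring and M a finitely generated Λ-module. Then M is faithful if and only if M cogenerates every finitely generated projective Λ-module, i.e., every finitely generated projective module embeds into a finite direct sum of copies of M. -/
universe u

set_option maxHeartbeats 1000000 in
theorem stmt5 (Λ : Type u) [Ring Λ] [IsArtinianRing Λ]
    (M : Type u) [AddCommGroup M] [Module Λ M] [Module.Finite Λ M] :
    Module.annihilator Λ M = ⊥ ↔
      ∀ (P : Type u) [AddCommGroup P] [Module Λ P], Module.Finite Λ P →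
        Module.Projective Λ P →
        ∃ (n : ℕ), 1 ≤ n ∧ ∃ f : P →ₗ[Λ] (Fin n → M), Function.Injective f := by
  classical
  constructor
  · intro hM P _ _ hfin hproj
    -- Step 1: Λ embeds into M^k for some k ≥ 1
    set K : Finset M → Submodule Λ Λ := fun S =>
      LinearMap.ker (LinearMap.pi (fun s : S => LinearMap.toSpanSingleton Λ M (s : M))) with hK
    have hmem : ∀ (S : Finset M) (x : Λ), x ∈ K S ↔ ∀ s ∈ S, x • s = 0 := by
      intro S x
      simp [hK, LinearMap.mem_ker, funext_iff, LinearMap.toSpanSingleton_apply,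
        Subtype.forall]
    obtain ⟨I, ⟨S₀, rfl⟩, hmin⟩ := IsArtinian.set_has_minimal (Set.range K)
      ⟨K ∅, ⟨∅, rfl⟩⟩
    have hbot : K S₀ = ⊥ := by
      rw [eq_bot_iff]
      intro x hx
      simp only [Submodule.mem_bot]
      by_contra hx0
      have hxann : x ∉ Module.annihilator Λ M := by
        rw [hM]; simpa using hx0
      obtain ⟨m, hm⟩ : ∃ m : M, x • m ≠ 0 := by
        by_contra hc
        push_neg at hc
        exact hxann (Module.mem_annihilator.mpr hc)
      have hlt : K (insert m S₀) < K S₀ := by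
        refine lt_of_le_of_ne ?_ ?_
        · intro y hy
          rw [hmem] at hy ⊢
          exact fun s hs => hy s (Finset.mem_insert_of_mem hs)
        · intro he
          have : x ∈ K (insert m S₀) := he ▸ hx
          rw [hmem] at this
          exact hm (this m (Finset.mem_insert_self _ _))
      exact hmin _ ⟨_, rfl⟩ hlt
    -- add 0 so the index set is nonempty
    set S₁ : Finset M := insert (0 : M) S₀ with hS₁
    have hbot1 : K S₁ = ⊥ := by
      rw [eq_bot_iff, ← hbot]
      intro y hy
      rw [hmem] at hy ⊢
      exact fun s hs => hy s (Finset.mem_insert_of_mem hs)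
    have hk1 : 1 ≤ S₁.card := Finset.card_pos.mpr ⟨0, Finset.mem_insert_self _ _⟩
    set k := S₁.card with hkdef
    set e : ↥S₁ ≃ Fin k := S₁.equivFin with he
    set g : Λ →ₗ[Λ] (Fin k → M) :=
      (LinearMap.funLeft Λ M e.symm).comp
        (LinearMap.pi (fun s : S₁ => LinearMap.toSpanSingleton Λ M (s : M))) with hg
    have hginj : Function.Injective g := by
      rw [hg, LinearMap.coe_comp]
      exact (LinearMap.funLeft_injective_of_surjective Λ M _ e.symm.surjective).comp
        (LinearMap.ker_eq_bot.mp hbot1)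
    -- Step 2: P embeds into Λ^(m+1)
    obtain ⟨m, π, hπ⟩ := Module.Finite.exists_fin' Λ P
    set ρ : (Fin (m + 1) → Λ) →ₗ[Λ] (Fin m → Λ) :=
      LinearMap.funLeft Λ Λ Fin.castSucc with hρdef
    have hρ : Function.Surjective ρ :=
      LinearMap.funLeft_surjective_of_injective Λ Λ _ (Fin.castSucc_injective m)
    have hπ' : Function.Surjective (π.comp ρ) := hπ.comp hρ
    obtain ⟨s, hs⟩ := Module.projective_lifting_property (π.comp ρ) LinearMap.id hπ'
    have hsinj : Function.Injective s := by
      intro x y hxy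
      have := congrArg (π.comp ρ) hxy
      rwa [← LinearMap.comp_apply, ← LinearMap.comp_apply, hs, LinearMap.id_apply,
        LinearMap.id_apply] at this
    -- Step 3: combine
    set G : (Fin (m + 1) → Λ) →ₗ[Λ] (Fin (m + 1) × Fin k → M) :=
      LinearMap.pi (fun p : Fin (m + 1) × Fin k =>
        (LinearMap.proj p.2).comp (g.comp (LinearMap.proj p.1))) with hG
    have hGinj : Function.Injective G := by
      rw [← LinearMap.ker_eq_bot, eq_bot_iff]
      intro v hv
      simp only [LinearMap.mem_ker, hG] at hv
      have : ∀ i, g (v i) = 0 := by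
        intro i
        funext j
        have := congrFun hv (i, j)
        simpa using this
      have hv0 : ∀ i, v i = 0 := fun i => hginj (by rw [this i, map_zero])
      simp only [Submodule.mem_bot]
      funext i; exact hv0 i
    refine ⟨(m + 1) * k, Nat.one_le_iff_ne_zero.mpr (Nat.mul_ne_zero (Nat.succ_ne_zero m) (Nat.one_le_iff_ne_zero.mp hk1)), ?_⟩
    refine ⟨(LinearMap.funLeft Λ M (finProdFinEquiv (m := m + 1) (n := k)).symm).comp
      (G.comp s), ?_⟩
    rw [LinearMap.coe_comp, LinearMap.coe_comp]
    exact (LinearMap.funLeft_injective_of_surjective Λ M _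
      (finProdFinEquiv.symm.surjective)).comp (hGinj.comp hsinj)
  · intro h
    obtain ⟨n, hn, f, hf⟩ := h Λ inferInstance inferInstance
    rw [eq_bot_iff]
    intro a ha
    rw [Module.mem_annihilator] at ha
    simp only [Submodule.mem_bot]
    apply hf
    rw [map_zero]
    have : f a = a • f 1 := by rw [← map_smul, smul_eq_mul, mul_one]
    rw [this]
    funext i
    simp [ha]
end

section
/- Let Λ be a left Artinian ring and M a finitely generated faithful Λ-module. Then for every finitely generated injective Λ-module E there exist n ≥ 1 and a surjective homomorphism M^n → E. -/
universe u

/-- Over an Artinian ring, a faithful module admits finitely many elements whose common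
annihilator is trivial, giving an embedding `Λ ↪ M^F`. -/
lemma exists_finset_inf_ker_eq_bot (Λ : Type u) [Ring Λ] [IsArtinianRing Λ]
    (M : Type u) [AddCommGroup M] [Module Λ M]
    (hfaith : Module.annihilator Λ M = ⊥) :
    ∃ F : Finset M, (⨅ m ∈ F, LinearMap.ker (LinearMap.toSpanSingleton Λ M m)) = ⊥ := by
  classical
  set K : Finset M → Submodule Λ Λ :=
    fun F => ⨅ m ∈ F, LinearMap.ker (LinearMap.toSpanSingleton Λ M m) with hK
  obtain ⟨p, ⟨F, rfl⟩, hmin⟩ :=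
    IsArtinian.set_has_minimal (Set.range K) ⟨K ∅, ⟨∅, rfl⟩⟩
  refine ⟨F, ?_⟩
  by_contra h
  obtain ⟨x, hxK, hx0⟩ := Submodule.exists_mem_ne_zero_of_ne_bot h
  have hxann : x ∉ Module.annihilator Λ M := by
    rw [hfaith]; exact hx0
  obtain ⟨m, hm⟩ : ∃ m : M, x • m ≠ 0 := by
    by_contra hc
    push_neg at hc
    exact hxann (Module.mem_annihilator.mpr hc)
  refine hmin (K (insert m F)) ⟨_, rfl⟩ (lt_of_le_of_ne ?_ ?_)
  · simp only [hK]
    exact le_iInf₂ fun a ha => iInf₂_le a (Finset.mem_insert_of_mem ha)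
  · intro heq
    have hxm : x ∈ K (insert m F) := heq ▸ hxK
    have : x ∈ LinearMap.ker (LinearMap.toSpanSingleton Λ M m) := by
      have := (Submodule.mem_iInf _).mp hxm m
      exact (Submodule.mem_iInf _).mp this (Finset.mem_insert_self m F)
    exact hm this

theorem stmt6 (Λ : Type u) [Ring Λ] [IsArtinianRing Λ]
    (M : Type u) [AddCommGroup M] [Module Λ M] [Module.Finite Λ M]
    (hfaith : Module.annihilator Λ M = ⊥) :
    ∀ (E : Type u) [AddCommGroup E] [Module Λ E], Module.Finite Λ E →
      Module.Injective Λ E →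
      ∃ (n : ℕ), 1 ≤ n ∧ ∃ f : (Fin n → M) →ₗ[Λ] E, Function.Surjective f := by
  classical
  intro E _ _ hfin hinj
  obtain ⟨F, hF⟩ := exists_finset_inf_ker_eq_bot Λ M hfaith
  -- the embedding Λ → (F → M)
  let φ : Λ →ₗ[Λ] (↥F → M) := LinearMap.pi fun m => LinearMap.toSpanSingleton Λ M m
  have hφ : Function.Injective φ := by
    rw [← LinearMap.ker_eq_bot, ← hF]
    ext x
    simp only [LinearMap.mem_ker, Submodule.mem_iInf, φ, LinearMap.pi_apply, funext_iff,
      Pi.zero_apply]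
    constructor
    · intro h m hm
      exact LinearMap.mem_ker.mpr (h ⟨m, hm⟩)
    · intro h m
      exact h m.1 m.2
  -- surjection from free module onto E
  obtain ⟨r, π, hπ⟩ := Module.Finite.exists_fin' Λ E
  -- the embedding (Fin r → Λ) → (Fin r → ↥F → M)
  let j : (Fin r → Λ) →ₗ[Λ] (Fin r → ↥F → M) := φ.compLeft (Fin r)
  have hj : Function.Injective j := fun a b hab => by
    funext i
    exact hφ (congrFun hab i)
  obtain ⟨g, hg⟩ := hinj.out j hj π
  have hgsurj : Function.Surjective g := fun e => by
    obtain ⟨x, hx⟩ := hπ e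
    exact ⟨j x, by rw [hg]; exact hx⟩
  -- rewrite the source as Fin n → M
  let ι := Fin r × ↥F
  let e1 : (ι → M) ≃ₗ[Λ] (Fin r → ↥F → M) := LinearEquiv.curry Λ M (Fin r) ↥F
  let e2 : (Fin (Fintype.card ι) → M) ≃ₗ[Λ] (ι → M) :=
    LinearEquiv.funCongrLeft Λ M (Fintype.equivFin ι)
  set n := Fintype.card ι
  let pr : (Fin (n + 1) → M) →ₗ[Λ] (Fin n → M) := LinearMap.funLeft Λ M Fin.castSucc
  have hpr : Function.Surjective pr :=
    LinearMap.funLeft_surjective_of_injective Λ M _ (Fin.castSucc_injective n)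
  refine ⟨n + 1, Nat.le_add_left 1 n, g ∘ₗ (e1.toLinearMap ∘ₗ e2.toLinearMap) ∘ₗ pr, ?_⟩
  simp only [LinearMap.coe_comp]
  exact hgsurj.comp ((e1.surjective.comp e2.surjective).comp hpr)
end

section
/- Let Λ be an Artinian algebra and S a faithful simple Λ-module. If Ext¹_Λ(S ⊕ Λ, S ⊕ Λ) = 0, then S is projective. -/
open CategoryTheory

universe u

/-- The Jacobson radical kills every semisimple module, so a faithful one forces it to vanish. -/
theorem IsArtinianRing.isSemisimpleRing_of_faithful {R M : Type*} [Ring R] [IsArtinianRing R]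
    [AddCommGroup M] [Module R M] [IsSemisimpleModule R M]
    (hfaith : Module.annihilator R M = ⊥) : IsSemisimpleRing R :=
  isSemisimpleRing_iff_jacobson.mpr <|
    eq_bot_iff.mpr <| hfaith ▸ IsSemisimpleModule.jacobson_le_annihilator R M

theorem stmt7_general (K : Type u) [Field K] (Λ : Type u) [Ring Λ] [Algebra K Λ]
    [FiniteDimensional K Λ]
    (S : Type u) [AddCommGroup S] [Module Λ S] [IsSimpleModule Λ S]
    (hfaith : Module.annihilator Λ S = ⊥) :
    Module.Projective Λ S := by
  have : IsArtinianRing Λ := isArtinian_of_tower K inferInstance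
  have : IsSemisimpleRing Λ := IsArtinianRing.isSemisimpleRing_of_faithful (M := S) hfaith
  exact Module.projective_of_isSemisimpleRing Λ S

theorem stmt7 (K : Type u) [Field K] (Λ : Type u) [Ring Λ] [Algebra K Λ]
    [FiniteDimensional K Λ]
    (S : Type u) [AddCommGroup S] [Module Λ S] [IsSimpleModule Λ S]
    (hfaith : Module.annihilator Λ S = ⊥)
    (hext : Subsingleton
      (ExtGrp Λ (ModuleCat.of Λ (S × Λ)) (ModuleCat.of Λ (S × Λ)) 1)) :
    Module.Projective Λ S :=
  stmt7_general K Λ S hfaith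
end

section
/- Let Λ be a local Artinian ring with maximal ideal m and residue field k, and M a finitely generated Λ-module with no nonzero projective direct summands. Then the natural map ζ(k) : Tr M ⊗_Λ k → Hom_Λ((Tr M)*, k), given by ζ(k)(a ⊗ r̄)(f) = f(a)·r̄, is the zero map. -/
open CategoryTheory TensorProduct

universe u

variable (Λ : Type u) [CommRing Λ]

/-- The natural map `ζ : M ⊗ N → Hom(M*, N)`, `ζ(m ⊗ n)(g) = g(m) • n`. -/
noncomputable def zetaMap (M N : Type u) [AddCommGroup M] [Module Λ M]
    [AddCommGroup N] [Module Λ N] :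
    (M ⊗[Λ] N) →ₗ[Λ] (Module.Dual Λ M →ₗ[Λ] N) :=
  TensorProduct.lift (LinearMap.mk₂ Λ
    (fun m n => (Module.Dual.eval Λ M m).smulRight n)
    (fun m m' n => by ext g; simp [add_smul])
    (fun c m n => by ext g; simp [mul_smul])
    (fun m n n' => by ext g; simp [smul_add])
    (fun c m n => by
      ext g
      simp only [LinearMap.smulRight_apply, LinearMap.smul_apply]
      exact smul_comm _ c n))

/-- The transpose of `M` with respect to the finite free presentation `f`. -/
abbrev TransposeOf (p q : ℕ) (f : (Fin p → Λ) →ₗ[Λ] (Fin q → Λ)) : Type u :=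
  (Module.Dual Λ (Fin p → Λ)) ⧸ LinearMap.range f.dualMap

/-- `M` has no nonzero projective direct summands. -/
def NoProjectiveSummands (M : Type u) [AddCommGroup M] [Module Λ M] : Prop :=
  ∀ A B : Submodule Λ M, IsCompl A B → Module.Projective Λ A → A = ⊥

/-! Dualising `P₀* → P₁* → Tr M → 0` identifies a functional on `Tr M` with evaluation at some
`x ∈ ker f`. Minimality of the presentation puts `x` in `m P₁`, so every functional on `Tr M`
takes values in `m`, and `ζ(a ⊗ r̄)(φ) = φ(a) r̄` vanishes in `k`. -/

open Module in
theorem Module.Dual.apply_mem_of_mem_smul_top {M : Type*} [AddCommGroup M] [Module Λ M]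
    {I : Ideal Λ} {x : M} (hx : x ∈ I • (⊤ : Submodule Λ M)) (h : Dual Λ M) : h x ∈ I :=
  (Submodule.smul_le (P := Submodule.comap h I)).mpr
    (fun r hr n _ ↦ by simpa using I.mul_mem_right (h n) hr) hx

open Module in
theorem Module.Dual.exists_mem_ker_of_dual_quotient_range_dualMap {P Q : Type*}
    [AddCommGroup P] [Module Λ P] [IsReflexive Λ P] [AddCommGroup Q] [Module Λ Q]
    [Projective Λ Q] (f : P →ₗ[Λ] Q) (φ : Dual Λ (Dual Λ P ⧸ LinearMap.range f.dualMap)) :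
    ∃ x ∈ LinearMap.ker f, ∀ h, φ (Submodule.mkQ _ h) = h x := by
  set x := (evalEquiv Λ P).symm (φ ∘ₗ Submodule.mkQ _)
  refine ⟨x, ?_, fun h ↦ by simp [x]⟩
  rw [LinearMap.mem_ker, ← forall_dual_apply_eq_zero_iff Λ]
  intro ℓ
  calc ℓ (f x) = φ (Submodule.mkQ _ (f.dualMap ℓ)) :=
        apply_evalEquiv_symm_apply Λ P (f.dualMap ℓ) _
    _ = 0 := by
        rw [Submodule.mkQ_apply,
          (Submodule.Quotient.mk_eq_zero _).mpr (LinearMap.mem_range_self _ ℓ), map_zero]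

theorem zetaMap_eq_zero_of_smul_eq_zero {M N : Type u} [AddCommGroup M] [Module Λ M]
    [AddCommGroup N] [Module Λ N] (h : ∀ (φ : Module.Dual Λ M) (a : M) (n : N), φ a • n = 0) :
    zetaMap Λ M N = 0 :=
  TensorProduct.ext' fun a n ↦ by ext φ; simp [zetaMap, h]

theorem zetaMap_residueField_eq_zero [IsLocalRing Λ] {M : Type u} [AddCommGroup M] [Module Λ M]
    (h : ∀ (φ : Module.Dual Λ M) (a : M), φ a ∈ IsLocalRing.maximalIdeal Λ) :
    zetaMap Λ M (IsLocalRing.ResidueField Λ) = 0 :=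
  zetaMap_eq_zero_of_smul_eq_zero Λ fun φ a n ↦ by
    rw [Algebra.smul_def, IsLocalRing.ResidueField.algebraMap_eq,
      (IsLocalRing.residue_eq_zero_iff _).mpr (h φ a), zero_mul]

theorem stmt13 [IsLocalRing Λ]
    (p q : ℕ) (f : (Fin p → Λ) →ₗ[Λ] (Fin q → Λ))
    (hmin₁ : LinearMap.ker f ≤
      (IsLocalRing.maximalIdeal Λ) • (⊤ : Submodule Λ (Fin p → Λ))) :
    zetaMap Λ (TransposeOf Λ p q f) (IsLocalRing.ResidueField Λ) = 0 := by
  refine zetaMap_residueField_eq_zero Λ fun φ a ↦ ?_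
  obtain ⟨x, hx, hφ⟩ := Module.Dual.exists_mem_ker_of_dual_quotient_range_dualMap Λ f φ
  obtain ⟨h, rfl⟩ := Submodule.mkQ_surjective _ a
  rw [hφ]
  exact Module.Dual.apply_mem_of_mem_smul_top Λ (hmin₁ hx) h
end
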